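/- arXiv:1709.04804 — 5 statements merged into one kernel-verified Lean document; each statement's English description precedes it below -/
import Mathlib

section
/- (Entropy dissipation inequality from interface entropy stability, Lemma on Γ − G.) Suppose η : Ω → ℝ is C² with Hessian eigenvalues ≥ η̲ > 0 on convex Ω ⊆ ℝ^N, and suppose that for all ν ≤ 1/L_g the state 𝒰 = u_K − ν(g − f) ∈ Ω satisfies η(𝒰) − η(u_K) + ν(G − F) ≤ 0, where g, f ∈ ℝ^N and G, F ∈ ℝ are fixed. Define Γ = F + ⟪∇η(u_K), g − f⟫. Then for every ν ∈ (0, 1/L_g], Γ − G ≥ (ν η̲ / 2)‖g − f‖². -/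
/-!
Write `d = g - f` and `φ(t) = η(u_K - t d)`. Along the segment `t ∈ [0, 1/L_g]` the Hessian bound
gives `φ'' ≥ η̲ ‖d‖²`, so `φ` lies above its second-order Taylor minorant at `0`:
`η(𝒰(ν)) ≥ η(u_K) - ν ⟪∇η(u_K), d⟫ + ν² η̲ ‖d‖² / 2`.
Inserting this into the entropy inequality at `ν` and dividing by `ν > 0` gives `Γ - G ≥ ν η̲ ‖d‖² / 2`.
-/

open RealInnerProductSpace Set

theorem quadratic_minorant_of_le_deriv2 {φ φ' φ'' : ℝ → ℝ} {a b m : ℝ} (hab : a ≤ b)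
    (hφ : ∀ t, HasDerivAt φ (φ' t) t) (hφ' : ∀ t, HasDerivAt φ' (φ'' t) t)
    (hm : ∀ t ∈ Icc a b, m ≤ φ'' t) :
    φ a + φ' a * (b - a) + m * (b - a) ^ 2 / 2 ≤ φ b := by
  have hslope : ∀ t, HasDerivAt (fun s => φ' s - m * s) (φ'' t - m * 1) t := fun t =>
    (hφ' t).sub ((hasDerivAt_id t).const_mul m)
  have hslope_mono : MonotoneOn (fun s => φ' s - m * s) (Icc a b) :=
    monotoneOn_of_hasDerivWithinAt_nonneg (convex_Icc a b)
      (fun t _ => (hslope t).continuousAt.continuousWithinAt)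
      (fun t _ => (hslope t).hasDerivWithinAt)
      (fun t ht => by linarith [hm t (interior_subset ht)])
  have hgap : ∀ t, HasDerivAt (fun s => φ s - φ' a * s - m * (s - a) ^ 2 / 2)
      (φ' t - φ' a * 1 - m * (2 * (t - a) ^ 1 * 1) / 2) t := fun t =>
    ((hφ t).sub ((hasDerivAt_id t).const_mul _)).sub
      ((((hasDerivAt_id t).sub_const a).pow 2).const_mul m |>.div_const 2)
  have hgap_mono : MonotoneOn (fun s => φ s - φ' a * s - m * (s - a) ^ 2 / 2) (Icc a b) :=
    monotoneOn_of_hasDerivWithinAt_nonneg (convex_Icc a b)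
      (fun t _ => (hgap t).continuousAt.continuousWithinAt)
      (fun t _ => (hgap t).hasDerivWithinAt)
      (fun t ht => by
        have := hslope_mono (left_mem_Icc.2 hab) (interior_subset ht) (interior_subset ht).1
        simp only at this
        linarith)
  have := hgap_mono (left_mem_Icc.2 hab) (right_mem_Icc.2 hab) hab
  simp only [sub_self] at this
  linarith

section Ray

variable {E F : Type*} [NormedAddCommGroup E] [NormedSpace ℝ E]
  [NormedAddCommGroup F] [NormedSpace ℝ F]

theorem DifferentiableAt.hasDerivAt_comp_add_smul {g : E → F} {x v : E} {t : ℝ}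
    (hg : DifferentiableAt ℝ g (x + t • v)) :
    HasDerivAt (fun s : ℝ => g (x + s • v)) (fderiv ℝ g (x + t • v) v) t := by
  have hline : HasDerivAt (fun s : ℝ => x + s • v) v t := by
    simpa using ((hasDerivAt_id t).smul_const v).const_add x
  exact hg.hasFDerivAt.comp_hasDerivAt t hline

end Ray

section Gradient

variable {E : Type*} [NormedAddCommGroup E] [InnerProductSpace ℝ E] [CompleteSpace E]

theorem ContDiff.differentiable_gradient {f : E → ℝ} (hf : ContDiff ℝ 2 f) :
    Differentiable ℝ (gradient f) :=
  ((InnerProductSpace.toDual ℝ E).symm.contDiff.comp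
    (hf.fderiv_right (m := 1) (by norm_num))).differentiable one_ne_zero

theorem quadratic_minorant_along_ray_of_le_hessian {f : E → ℝ} (hf : Differentiable ℝ f)
    (hgrad : Differentiable ℝ (gradient f)) {x v : E} {m T : ℝ} (hT : 0 ≤ T)
    (hm : ∀ t ∈ Icc 0 T, m * ‖v‖ ^ 2 ≤ ⟪fderiv ℝ (gradient f) (x + t • v) v, v⟫) :
    f x + T * ⟪gradient f x, v⟫ + m * ‖v‖ ^ 2 * T ^ 2 / 2 ≤ f (x + T • v) := by
  have hφ : ∀ t : ℝ, HasDerivAt (fun s : ℝ => f (x + s • v)) ⟪gradient f (x + t • v), v⟫ t :=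
    fun t => by
      simpa only [gradient, InnerProductSpace.toDual_symm_apply] using
        (hf _).hasDerivAt_comp_add_smul
  have hφ' : ∀ t : ℝ, HasDerivAt (fun s : ℝ => ⟪gradient f (x + s • v), v⟫)
      ⟪fderiv ℝ (gradient f) (x + t • v) v, v⟫ t :=
    fun t => ((hgrad _).hasDerivAt_comp_add_smul).inner ℝ (hasDerivAt_const t v) |>.congr_deriv
      (by simp)
  have := quadratic_minorant_of_le_deriv2 hT hφ hφ' hm
  simp only [zero_smul, add_zero, sub_zero] at this
  linarith

end Gradient

theorem stmt_6_general {N : ℕ} (Ω : Set (EuclideanSpace ℝ (Fin N)))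
    (η : EuclideanSpace ℝ (Fin N) → ℝ) (ηl : ℝ)
    (hC2 : ContDiff ℝ 2 η)
    (hHess : ∀ w ∈ Ω, ∀ x : EuclideanSpace ℝ (Fin N),
      ηl * ‖x‖ ^ 2 ≤ ⟪fderiv ℝ (gradient η) w x, x⟫)
    (Lg : ℝ)
    (uK gv fv : EuclideanSpace ℝ (Fin N)) (G F : ℝ)
    (hmem : ∀ ν : ℝ, 0 ≤ ν → ν ≤ 1 / Lg → uK - ν • (gv - fv) ∈ Ω)
    (hent : ∀ ν : ℝ, 0 ≤ ν → ν ≤ 1 / Lg →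
      η (uK - ν • (gv - fv)) - η uK + ν * (G - F) ≤ 0)
    (Γ : ℝ) (hΓ : Γ = F + ⟪gradient η uK, gv - fv⟫) :
    ∀ ν : ℝ, 0 < ν → ν ≤ 1 / Lg → ν * ηl / 2 * ‖gv - fv‖ ^ 2 ≤ Γ - G := by
  intro ν hν hνL
  have hray : ∀ t : ℝ, uK + t • -(gv - fv) = uK - t • (gv - fv) := fun t => by
    rw [smul_neg, ← sub_eq_add_neg]
  have hminorant := quadratic_minorant_along_ray_of_le_hessian (x := uK) (v := -(gv - fv))
    (m := ηl) (hC2.differentiable two_ne_zero) hC2.differentiable_gradient hν.le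
    (fun t ht => by
      rw [hray, map_neg, inner_neg_neg, norm_neg]
      exact hHess _ (hmem t ht.1 (ht.2.trans hνL)) _)
  rw [hray, inner_neg_right, norm_neg] at hminorant
  have hdissipation := hent ν hν.le hνL
  have hscaled : ν * (ν * ηl / 2 * ‖gv - fv‖ ^ 2) ≤ ν * (Γ - G) := by
    rw [hΓ]
    linarith
  exact le_of_mul_le_mul_left hscaled hν

theorem stmt_6 {N : ℕ} (Ω : Set (EuclideanSpace ℝ (Fin N))) (hΩ : Convex ℝ Ω)
    (η : EuclideanSpace ℝ (Fin N) → ℝ) (ηl : ℝ) (hηl : 0 < ηl)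
    (hC2 : ContDiff ℝ 2 η)
    (hHess : ∀ w ∈ Ω, ∀ x : EuclideanSpace ℝ (Fin N),
      ηl * ‖x‖ ^ 2 ≤ ⟪fderiv ℝ (gradient η) w x, x⟫)
    (Lg : ℝ) (hLg : 0 < Lg)
    (uK gv fv : EuclideanSpace ℝ (Fin N)) (G F : ℝ)
    (hmem : ∀ ν : ℝ, 0 ≤ ν → ν ≤ 1 / Lg → uK - ν • (gv - fv) ∈ Ω)
    (hent : ∀ ν : ℝ, 0 ≤ ν → ν ≤ 1 / Lg →
      η (uK - ν • (gv - fv)) - η uK + ν * (G - F) ≤ 0)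
    (Γ : ℝ) (hΓ : Γ = F + ⟪gradient η uK, gv - fv⟫) :
    ∀ ν : ℝ, 0 < ν → ν ≤ 1 / Lg → ν * ηl / 2 * ‖gv - fv‖ ^ 2 ≤ Γ - G :=
  stmt_6_general Ω η ηl hC2 hHess Lg uK gv fv G F hmem hent Γ hΓ
end

section
/- (Invariance of the admissible set.) Suppose Ω ⊆ ℝ^N is convex and the numerical flux g satisfies: for all states w_K, w_L with u_K, u_L ∈ Ω, all unit normals n, and all ν ≤ 1/L_g, the intermediate state 𝒰(w_K, w_L; n, ν) = u_K − ν(g(w_K,w_L;n) − f(w_K)·n) lies in Ω. Then under the CFL condition Δt ≤ min_K |K|/(L_g |∂K|), the finite volume scheme u_K^{n+1} = u_K^n − (Δt/|K|) Σ_L |e_{KL}| g(w_K^n, w_L^n; n_{KL}) preserves Ω: if u_K^0 ∈ Ω for all K, then u_K^n ∈ Ω for all K and all n ∈ ℕ. -/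
/-!
The update of cell `K` is a convex combination, with weights `|e_KL| / |∂K|`, of the intermediate
states `𝒰(w_K, w_L; n_KL, ν)` with `ν = Δt |∂K| / |K|`: the identity `Σ_L |e_KL| f(w_K)·n_KL = 0`
lets one subtract the physical flux for free. The CFL condition is exactly `ν ≤ 1 / L_g`, so every
intermediate state lies in `Ω`, and convexity keeps the combination in `Ω`.
-/

open Finset

section

variable {ι E : Type*} [AddCommGroup E] [Module ℝ E]

theorem sub_smul_sum_eq_sum_div_smul (s : Finset ι) (e : ι → ℝ) (hp : ∑ i ∈ s, e i ≠ 0)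
    (c : ℝ) (u : E) (G F : ι → E) (hF : ∑ i ∈ s, e i • F i = 0) :
    u - c • ∑ i ∈ s, e i • G i =
      ∑ i ∈ s, (e i / ∑ j ∈ s, e j) • (u - (c * ∑ j ∈ s, e j) • (G i - F i)) := by
  have hterm : ∀ i, (e i / ∑ j ∈ s, e j) • (u - (c * ∑ j ∈ s, e j) • (G i - F i)) =
      (e i / ∑ j ∈ s, e j) • u - c • (e i • G i) + c • (e i • F i) := by
    intro i
    match_scalars <;> field_simp
  simp only [hterm, sum_add_distrib, sum_sub_distrib, ← sum_smul, ← smul_sum, hF, smul_zero,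
    add_zero, ← sum_div, div_self hp, one_smul]

theorem Convex.sub_smul_sum_mem {Ω : Set E} (hΩ : Convex ℝ Ω) {s : Finset ι} {e : ι → ℝ}
    (he : ∀ i ∈ s, 0 < e i) {c : ℝ} {u : E} {G F : ι → E} (hF : ∑ i ∈ s, e i • F i = 0)
    (hu : u ∈ Ω) (hstep : ∀ i ∈ s, u - (c * ∑ j ∈ s, e j) • (G i - F i) ∈ Ω) :
    u - c • ∑ i ∈ s, e i • G i ∈ Ω := by
  rcases s.eq_empty_or_nonempty with rfl | hs
  · simpa using hu
  have hp : 0 < ∑ j ∈ s, e j := sum_pos he hs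
  rw [sub_smul_sum_eq_sum_div_smul s e hp.ne' c u G F hF]
  refine hΩ.sum_mem (fun i hi => div_nonneg (he i hi).le hp.le) ?_ hstep
  rw [← sum_div, div_self hp.ne']

end

theorem stmt_8_general {N d : ℕ} {𝒦 : Type*}
    (Ω : Set (EuclideanSpace ℝ (Fin N))) (hΩ : Convex ℝ Ω)
    (vol : 𝒦 → ℝ) (hvol : ∀ K, 0 < vol K)
    (𝒩 : 𝒦 → Finset 𝒦)
    (e : 𝒦 → 𝒦 → ℝ) (he : ∀ K L, L ∈ 𝒩 K → 0 < e K L)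
    (pK : 𝒦 → ℝ) (hpK : ∀ K, pK K = ∑ L ∈ 𝒩 K, e K L)
    (nrm : 𝒦 → 𝒦 → EuclideanSpace ℝ (Fin d)) (hnrm : ∀ K L, ‖nrm K L‖ = 1)
    (g : (EuclideanSpace ℝ (Fin N) × ℝ) → (EuclideanSpace ℝ (Fin N) × ℝ) →
      EuclideanSpace ℝ (Fin d) → EuclideanSpace ℝ (Fin N))
    (f : (EuclideanSpace ℝ (Fin N) × ℝ) → EuclideanSpace ℝ (Fin d) →
      EuclideanSpace ℝ (Fin N))
    (hclosed : ∀ (K : 𝒦) (w : EuclideanSpace ℝ (Fin N) × ℝ),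
      ∑ L ∈ 𝒩 K, e K L • f w (nrm K L) = 0)
    (Lg : ℝ)
    (hinv : ∀ (uK uL : EuclideanSpace ℝ (Fin N)) (αK αL : ℝ)
      (n : EuclideanSpace ℝ (Fin d)) (ν : ℝ), uK ∈ Ω → uL ∈ Ω → ‖n‖ = 1 →
      0 ≤ ν → ν ≤ 1 / Lg →
      uK - ν • (g (uK, αK) (uL, αL) n - f (uK, αK) n) ∈ Ω)
    (Δt : ℝ) (hΔt : 0 < Δt)
    (hCFL : ∀ K, Δt * pK K ≤ vol K / Lg)
    (α : 𝒦 → ℝ) (u : ℕ → 𝒦 → EuclideanSpace ℝ (Fin N))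
    (hscheme : ∀ n K, u (n + 1) K = u n K -
      (Δt / vol K) • ∑ L ∈ 𝒩 K, e K L • g (u n K, α K) (u n L, α L) (nrm K L))
    (hinit : ∀ K, u 0 K ∈ Ω) :
    ∀ n K, u n K ∈ Ω := by
  intro n
  induction n with
  | zero => exact hinit
  | succ n ih =>
    intro K
    have hν : Δt / vol K * ∑ L ∈ 𝒩 K, e K L = Δt * pK K / vol K := by
      rw [hpK]; ring
    have hν_nonneg : 0 ≤ Δt * pK K / vol K := by
      rw [hpK]
      exact div_nonneg (mul_nonneg hΔt.le (sum_nonneg fun L hL => (he K L hL).le)) (hvol K).le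
    have hν_le : Δt * pK K / vol K ≤ 1 / Lg := by
      calc Δt * pK K / vol K ≤ vol K / Lg / vol K := by gcongr; exacts [(hvol K).le, hCFL K]
        _ = 1 / Lg := by field_simp [(hvol K).ne']
    rw [hscheme]
    refine hΩ.sub_smul_sum_mem (he K) (hclosed K (u n K, α K)) (ih K) fun L _ => ?_
    rw [hν]
    exact hinv _ _ _ _ _ _ (ih K) (ih L) (hnrm K L) hν_nonneg hν_le

theorem stmt_8 {N d : ℕ} {𝒦 : Type*}
    (Ω : Set (EuclideanSpace ℝ (Fin N))) (hΩ : Convex ℝ Ω)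
    (vol : 𝒦 → ℝ) (hvol : ∀ K, 0 < vol K)
    (𝒩 : 𝒦 → Finset 𝒦) (h𝒩 : ∀ K, (𝒩 K).Nonempty)
    (e : 𝒦 → 𝒦 → ℝ) (he : ∀ K L, L ∈ 𝒩 K → 0 < e K L)
    (pK : 𝒦 → ℝ) (hpK : ∀ K, pK K = ∑ L ∈ 𝒩 K, e K L)
    (nrm : 𝒦 → 𝒦 → EuclideanSpace ℝ (Fin d)) (hnrm : ∀ K L, ‖nrm K L‖ = 1)
    (g : (EuclideanSpace ℝ (Fin N) × ℝ) → (EuclideanSpace ℝ (Fin N) × ℝ) →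
      EuclideanSpace ℝ (Fin d) → EuclideanSpace ℝ (Fin N))
    (f : (EuclideanSpace ℝ (Fin N) × ℝ) → EuclideanSpace ℝ (Fin d) →
      EuclideanSpace ℝ (Fin N))
    (hclosed : ∀ (K : 𝒦) (w : EuclideanSpace ℝ (Fin N) × ℝ),
      ∑ L ∈ 𝒩 K, e K L • f w (nrm K L) = 0)
    (Lg : ℝ) (hLg : 0 < Lg)
    (hinv : ∀ (uK uL : EuclideanSpace ℝ (Fin N)) (αK αL : ℝ)
      (n : EuclideanSpace ℝ (Fin d)) (ν : ℝ), uK ∈ Ω → uL ∈ Ω → ‖n‖ = 1 →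
      0 ≤ ν → ν ≤ 1 / Lg →
      uK - ν • (g (uK, αK) (uL, αL) n - f (uK, αK) n) ∈ Ω)
    (Δt : ℝ) (hΔt : 0 < Δt)
    (hCFL : ∀ K, Δt * pK K ≤ vol K / Lg)
    (α : 𝒦 → ℝ) (u : ℕ → 𝒦 → EuclideanSpace ℝ (Fin N))
    (hscheme : ∀ n K, u (n + 1) K = u n K -
      (Δt / vol K) • ∑ L ∈ 𝒩 K, e K L • g (u n K, α K) (u n L, α L) (nrm K L))
    (hinit : ∀ K, u 0 K ∈ Ω) :
    ∀ n K, u n K ∈ Ω :=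
  stmt_8_general Ω hΩ vol hvol 𝒩 e he pK hpK nrm hnrm g f hclosed Lg hinv Δt hΔt hCFL α u hscheme
    hinit
end

section
/- (Discrete cell entropy inequality.) Under the same setting, if additionally η is convex on Ω and for all ν ≤ 1/L_g the interface entropy inequality η(𝒰(w_K, w_L; n, ν), α_K) − η(w_K) + ν(G(w_K,w_L;n) − F(w_K)·n) ≤ 0 holds, and the normals satisfy Σ_L |e_{KL}| F(w_K)·n_{KL} = 0, then under the CFL condition Δt ≤ min_K |K|/(L_g|∂K|) the scheme satisfies η(w_K^{n+1}) ≤ η(w_K^n) − (Δt/|K|) Σ_{L∈𝒩(K)} |e_{KL}| G(w_K^n, w_L^n; n_{KL}). -/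
/-!
With weights `e i / ∑ e` and the enlarged step `ν = (Δt / |K|) ∑ e`, the cell update is the convex
combination of the interface updates `u - ν • (g i - f i)`, because the closed-cell identity
`∑ e i • f i = 0` lets the fluxes `f i` be inserted for free. Jensen's inequality for `η` and the
interface entropy inequalities (valid since the CFL condition gives `ν ≤ 1 / L_g`) then bound
`η` of the update by the same convex combination of `η u - ν (G i - F i)`, which collapses by the
same identity, now in `ℝ` with `∑ e i * F i = 0`.
-/

open Finset

theorem sub_smul_sum_eq_sum_weighted_interface_updates {ι 𝕜 E : Type*} [Fintype ι] [Field 𝕜]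
    [AddCommGroup E] [Module 𝕜 E] {e : ι → 𝕜} (hsum : ∑ i, e i ≠ 0)
    {f : ι → E} (hf : ∑ i, e i • f i = 0) (u : E) (g : ι → E) (c : 𝕜) :
    u - c • ∑ i, e i • g i
      = ∑ i, (e i / ∑ j, e j) • (u - (c * ∑ j, e j) • (g i - f i)) := by
  set P := ∑ j, e j
  have hweight : ∀ i, e i / P * (c * P) = c * e i := fun i => by field_simp
  calc u - c • ∑ i, e i • g i
      = (∑ i, e i / P) • u - c • ∑ i, e i • g i + c • ∑ i, e i • f i := by
        rw [← sum_div, div_self hsum, one_smul, hf, smul_zero, add_zero]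
    _ = ∑ i, (e i / P) • (u - (c * P) • (g i - f i)) := by
        simp only [sum_smul, smul_sum, ← sum_sub_distrib, ← sum_add_distrib]
        refine sum_congr rfl fun i _ => ?_
        rw [smul_sub, smul_smul (e i / P), hweight]
        module

theorem ConvexOn.map_sub_smul_sum_le {ι E : Type*} [Fintype ι]
    [AddCommGroup E] [Module ℝ E] {s : Set E} {φ : E → ℝ} (hφ : ConvexOn ℝ s φ)
    {e : ι → ℝ} (he : ∀ i, 0 ≤ e i) (hsum : 0 < ∑ i, e i)
    {f g : ι → E} {F G : ι → ℝ} (hf : ∑ i, e i • f i = 0) (hF : ∑ i, e i * F i = 0)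
    {u : E} {c : ℝ}
    (hmem : ∀ i, u - (c * ∑ j, e j) • (g i - f i) ∈ s)
    (hent : ∀ i, φ (u - (c * ∑ j, e j) • (g i - f i)) ≤ φ u - (c * ∑ j, e j) * (G i - F i)) :
    φ (u - c • ∑ i, e i • g i) ≤ φ u - c * ∑ i, e i * G i := by
  have hw₀ : ∀ i ∈ univ, 0 ≤ e i / ∑ j, e j := fun i _ => div_nonneg (he i) hsum.le
  have hw₁ : ∑ i, e i / ∑ j, e j = 1 := by rw [← sum_div, div_self hsum.ne']
  have hF' := sub_smul_sum_eq_sum_weighted_interface_updates hsum.ne' hF (φ u) G c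
  simp only [smul_eq_mul] at hF'
  rw [sub_smul_sum_eq_sum_weighted_interface_updates hsum.ne' hf, hF']
  calc _ ≤ ∑ i, (e i / ∑ j, e j) • φ (u - (c * ∑ j, e j) • (g i - f i)) :=
        hφ.map_sum_le hw₀ hw₁ fun i _ => hmem i
    _ ≤ _ := sum_le_sum fun i hi => mul_le_mul_of_nonneg_left (hent i) (hw₀ i hi)

theorem stmt_9_general {N : ℕ} {ι : Type*} [Fintype ι] [Nonempty ι]
    (Ω : Set (EuclideanSpace ℝ (Fin N)))
    (η : EuclideanSpace ℝ (Fin N) → ℝ → ℝ) (αK : ℝ)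
    (hconv : ConvexOn ℝ Ω (fun u => η u αK))
    (Lg vol Δt pK : ℝ) (hvol : 0 < vol) (hΔt : 0 < Δt)
    (e : ι → ℝ) (he : ∀ i, 0 < e i) (hpK : pK = ∑ i, e i)
    (uK : EuclideanSpace ℝ (Fin N))
    (gf ff : ι → EuclideanSpace ℝ (Fin N)) (Gf Ff : ι → ℝ)
    (hfdiv : ∑ i, e i • ff i = 0) (hFdiv : ∑ i, e i * Ff i = 0)
    (hmem : ∀ (i : ι) (ν : ℝ), 0 ≤ ν → ν ≤ 1 / Lg → uK - ν • (gf i - ff i) ∈ Ω)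
    (hent : ∀ (i : ι) (ν : ℝ), 0 ≤ ν → ν ≤ 1 / Lg →
      η (uK - ν • (gf i - ff i)) αK - η uK αK + ν * (Gf i - Ff i) ≤ 0)
    (hCFL : Δt * pK ≤ vol / Lg) :
    η (uK - (Δt / vol) • ∑ i, e i • gf i) αK
      ≤ η uK αK - (Δt / vol) * ∑ i, e i * Gf i := by
  subst hpK
  have hsum : 0 < ∑ i, e i := sum_pos (fun i _ => he i) univ_nonempty
  have hν₀ : 0 ≤ Δt / vol * ∑ i, e i := by positivity
  have hν₁ : Δt / vol * ∑ i, e i ≤ 1 / Lg := by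
    calc Δt / vol * ∑ i, e i = Δt * (∑ i, e i) / vol := by ring
      _ ≤ vol / Lg / vol := by gcongr
      _ = 1 / Lg := by field_simp
  refine hconv.map_sub_smul_sum_le (fun i => (he i).le) hsum hfdiv hFdiv
    (fun i => hmem i _ hν₀ hν₁) fun i => ?_
  linarith [hent i _ hν₀ hν₁]

theorem stmt_9 {N : ℕ} {ι : Type*} [Fintype ι] [Nonempty ι]
    (Ω : Set (EuclideanSpace ℝ (Fin N))) (hΩ : Convex ℝ Ω)
    (η : EuclideanSpace ℝ (Fin N) → ℝ → ℝ) (αK : ℝ)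
    (hconv : ConvexOn ℝ Ω (fun u => η u αK))
    (Lg vol Δt pK : ℝ) (hLg : 0 < Lg) (hvol : 0 < vol) (hΔt : 0 < Δt)
    (e : ι → ℝ) (he : ∀ i, 0 < e i) (hpK : pK = ∑ i, e i)
    (uK : EuclideanSpace ℝ (Fin N)) (huK : uK ∈ Ω)
    (gf ff : ι → EuclideanSpace ℝ (Fin N)) (Gf Ff : ι → ℝ)
    (hfdiv : ∑ i, e i • ff i = 0) (hFdiv : ∑ i, e i * Ff i = 0)
    (hmem : ∀ (i : ι) (ν : ℝ), 0 ≤ ν → ν ≤ 1 / Lg → uK - ν • (gf i - ff i) ∈ Ω)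
    (hent : ∀ (i : ι) (ν : ℝ), 0 ≤ ν → ν ≤ 1 / Lg →
      η (uK - ν • (gf i - ff i)) αK - η uK αK + ν * (Gf i - Ff i) ≤ 0)
    (hCFL : Δt * pK ≤ vol / Lg) :
    η (uK - (Δt / vol) • ∑ i, e i • gf i) αK
      ≤ η uK αK - (Δt / vol) * ∑ i, e i * Gf i :=
  stmt_9_general Ω η αK hconv Lg vol Δt pK hvol hΔt e he hpK uK gf ff Gf Ff hfdiv hFdiv hmem hent
    hCFL
end

section
/- (Relative-entropy inequality for the scheme, Theorem 5 core computation.) With H₀ ∈ ℝ^N fixed and states v_K satisfying ∇_u η(v_K, α_K) = H₀ for all K, the relative entropy h(u,v,α) = η(u,α) − η(v,α) − ⟪∇_u η(v,α), u − v⟫ satisfies, for the finite volume scheme and with G_{H₀}(w_K,w_L;n) := G(w_K,w_L;n) − ⟪H₀, g(w_K,w_L;n)⟫: h(u_K^{n+1}, v_K, α_K) − h(u_K^n, v_K, α_K) + (Δt/|K|) Σ_L |e_{KL}| G_{H₀}(w_K^n, w_L^n; n_{KL}) ≤ D_K^n, whenever the discrete entropy inequality η(w_K^{n+1}) − η(w_K^n)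 + (Δt/|K|) Σ_L |e_{KL}| G(w_K^n,w_L^n;n_{KL}) ≤ D_K^n holds. -/
/-!
The relative entropy differs from `η(·, α_K)` by an affine function of `u` with slope `H₀`.
Its increment over one step is therefore the entropy increment minus `⟪H₀, u_K^{n+1} - u_K^n⟫`,
and by the conservative form of the scheme this correction is exactly
`(Δt/|K|) Σ_L |e_KL| ⟪H₀, g(w_K^n, w_L^n; n_KL)⟫`, the term by which `G_{H₀}` differs from `G`.
The relative-entropy inequality is thus the discrete entropy inequality rewritten.
-/

open RealInnerProductSpace

section

variable {E : Type*} [NormedAddCommGroup E] [InnerProductSpace ℝ E]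

lemma sub_eq_sub_sub_inner_of_eq_sub_inner {f h : E → ℝ} {c : ℝ} {H v : E}
    (hh : ∀ u, h u = f u - c - ⟪H, u - v⟫) (u₀ u₁ : E) :
    h u₁ - h u₀ = f u₁ - f u₀ - ⟪H, u₁ - u₀⟫ := by
  simp only [hh, inner_sub_right]
  ring

lemma inner_sub_eq_neg_mul_sum_of_eq_sub_smul_sum {ι : Type*} [Fintype ι]
    {u₀ u₁ H : E} {τ : ℝ} {e : ι → ℝ} {g : ι → E}
    (hstep : u₁ = u₀ - τ • ∑ i, e i • g i) :
    ⟪H, u₁ - u₀⟫ = -(τ * ∑ i, e i * ⟪H, g i⟫) := by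
  simp only [hstep, sub_sub_cancel_left, inner_neg_right, real_inner_smul_right, inner_sum]

end

theorem stmt_11_general {N : ℕ} {ι : Type*} [Fintype ι]
    (η : EuclideanSpace ℝ (Fin N) → ℝ → ℝ) (αK : ℝ)
    (vK H₀ : EuclideanSpace ℝ (Fin N))
    (hrel : EuclideanSpace ℝ (Fin N) → ℝ)
    (hhdef : ∀ u, hrel u = η u αK - η vK αK - ⟪H₀, u - vK⟫)
    (vol Δt : ℝ)
    (e : ι → ℝ) (gf : ι → EuclideanSpace ℝ (Fin N)) (Gf : ι → ℝ)
    (uK uK1 : EuclideanSpace ℝ (Fin N)) (DK : ℝ)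
    (hscheme : uK1 = uK - (Δt / vol) • ∑ i, e i • gf i)
    (hdei : η uK1 αK - η uK αK + (Δt / vol) * ∑ i, e i * Gf i ≤ DK)
    (GH : ι → ℝ) (hGH : ∀ i, GH i = Gf i - ⟪H₀, gf i⟫) :
    hrel uK1 - hrel uK + (Δt / vol) * ∑ i, e i * GH i ≤ DK := by
  have hincr := sub_eq_sub_sub_inner_of_eq_sub_inner hhdef uK uK1
  have hflux := inner_sub_eq_neg_mul_sum_of_eq_sub_smul_sum (H := H₀) hscheme
  have hsplit : ∑ i, e i * GH i = ∑ i, e i * Gf i - ∑ i, e i * ⟪H₀, gf i⟫ := by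
    simp only [hGH, mul_sub, Finset.sum_sub_distrib]
  rw [hincr, hflux, hsplit]
  linarith

theorem stmt_11 {N : ℕ} {ι : Type*} [Fintype ι]
    (η : EuclideanSpace ℝ (Fin N) → ℝ → ℝ) (αK : ℝ)
    (vK H₀ : EuclideanSpace ℝ (Fin N))
    (hgrad : gradient (fun u => η u αK) vK = H₀)
    (hrel : EuclideanSpace ℝ (Fin N) → ℝ)
    (hhdef : ∀ u, hrel u = η u αK - η vK αK - ⟪H₀, u - vK⟫)
    (vol Δt : ℝ) (hvol : 0 < vol) (hΔt : 0 < Δt)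
    (e : ι → ℝ) (gf : ι → EuclideanSpace ℝ (Fin N)) (Gf : ι → ℝ)
    (uK uK1 : EuclideanSpace ℝ (Fin N)) (DK : ℝ)
    (hscheme : uK1 = uK - (Δt / vol) • ∑ i, e i • gf i)
    (hdei : η uK1 αK - η uK αK + (Δt / vol) * ∑ i, e i * Gf i ≤ DK)
    (GH : ι → ℝ) (hGH : ∀ i, GH i = Gf i - ⟪H₀, gf i⟫) :
    hrel uK1 - hrel uK + (Δt / vol) * ∑ i, e i * GH i ≤ DK :=
  stmt_11_general η αK vK H₀ hrel hhdef vol Δt e gf Gf uK uK1 DK hscheme hdei GH hGH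
end

section
/- (Smooth relative-entropy identity.) Let α ∈ C¹(ℝ^d), u a C¹ solution of ∂_t u + div_x f(u,α) + Σᵢ sᵢ(u,α) ∂ᵢα = 0, and v a time-independent C¹ function with ∇_u η(v(x), α(x)) = H₀ constant and ⟪H₀, sᵢ(w)⟫ = 0 for all i and all states w. Assume (η, F) is an entropy pair (satisfying ∂_u η ∂_u fᵢ = ∂_u Fᵢ and ∂_u η (∂_α fᵢ + sᵢ) = ∂_α Fᵢ). Then the relative entropy h(u,v,α) = η(u,α) − η(v,α) − ⟪∇_u η(v,α), u−v⟫ satisfies the conservation law ∂_t h(u,v,α) + div_x ( F(u,α) − ⟪H₀, f(u,α)⟫ ) = 0. -/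
/-!
Write `G = ∇_u η(u, α)`. The time derivative of `h` is `⟪G - H₀, ∂ₜu⟫`. By the chain rule and the
compatibility relations, `∂ᵢ F(u, α) = ⟪G, ∂ᵢ f(u, α) + ∂ᵢα sᵢ⟫`, while `∂ᵢ ⟪H₀, f(u, α)⟫` equals
`⟪H₀, ∂ᵢ f(u, α) + ∂ᵢα sᵢ⟫` because `⟪H₀, sᵢ⟫ = 0`. Summing over `i`, the flux divergence is
`⟪G - H₀, Σᵢ (∂ᵢ f(u, α) + ∂ᵢα sᵢ)⟫ = ⟪G - H₀, -∂ₜu⟫` by the equation, which cancels the time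
derivative.
-/

open RealInnerProductSpace

section ChainRule

variable {E X Y : Type*} [NormedAddCommGroup E] [NormedSpace ℝ E]
  [NormedAddCommGroup X] [NormedSpace ℝ X] [NormedAddCommGroup Y] [NormedSpace ℝ Y]

theorem fderiv_comp₂_apply {g : E → ℝ → X} {φ : Y → E} {ψ : Y → ℝ} {x : Y}
    (hg : DifferentiableAt ℝ (fun p : E × ℝ => g p.1 p.2) (φ x, ψ x))
    (hφ : DifferentiableAt ℝ φ x) (hψ : DifferentiableAt ℝ ψ x) (h : Y) :
    fderiv ℝ (fun y => g (φ y) (ψ y)) x h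
      = fderiv ℝ (fun w => g w (ψ x)) (φ x) (fderiv ℝ φ x h)
        + fderiv ℝ ψ x h • deriv (fun a => g (φ x) a) (ψ x) := by
  set g' := fderiv ℝ (fun p : E × ℝ => g p.1 p.2) (φ x, ψ x)
  have hfst : HasFDerivAt (fun w => g w (ψ x)) (g'.comp (.inl ℝ E ℝ)) (φ x) :=
    hg.hasFDerivAt.comp (g := fun p : E × ℝ => g p.1 p.2) (φ x)
      (hasFDerivAt_prodMk_left (𝕜 := ℝ) (φ x) (ψ x))
  have hsnd : HasFDerivAt (fun a => g (φ x) a) (g'.comp (.inr ℝ E ℝ)) (ψ x) :=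
    hg.hasFDerivAt.comp (g := fun p : E × ℝ => g p.1 p.2) (ψ x)
      (hasFDerivAt_prodMk_right (𝕜 := ℝ) (φ x) (ψ x))
  have hcomp :
      HasFDerivAt (fun y => g (φ y) (ψ y)) (g'.comp ((fderiv ℝ φ x).prod (fderiv ℝ ψ x))) x :=
    hg.hasFDerivAt.comp (g := fun p : E × ℝ => g p.1 p.2) x
      (hφ.hasFDerivAt.prodMk hψ.hasFDerivAt)
  rw [hcomp.fderiv, hfst.fderiv, hsnd.hasDerivAt.deriv]
  simp only [ContinuousLinearMap.comp_apply, ← map_smul, ← map_add]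
  simp

end ChainRule

section EntropyFlux

variable {E Y : Type*} [NormedAddCommGroup E] [InnerProductSpace ℝ E] [CompleteSpace E]
  [NormedAddCommGroup Y] [NormedSpace ℝ Y]

theorem hasDerivAt_relEntropy {η : E → ℝ} {φ : ℝ → E} {U : E} {t : ℝ} (H c : E)
    (hη : DifferentiableAt ℝ η (φ t)) (hφ : HasDerivAt φ U t) :
    HasDerivAt (fun τ => η (φ τ) - η c - ⟪H, φ τ - c⟫) ⟪gradient η (φ t) - H, U⟫ t := by
  have hηφ : HasDerivAt (fun τ => η (φ τ)) ⟪gradient η (φ t), U⟫ t := by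
    rw [inner_gradient_left]
    exact hη.hasFDerivAt.comp_hasDerivAt t hφ
  have hHφ := (hasDerivAt_const t H).inner ℝ (hφ.sub_const c)
  rw [inner_zero_left, add_zero] at hHφ
  rw [inner_sub_left]
  exact (hηφ.sub_const (η c)).sub hHφ

/-- The compatibility relations of an entropy pair in a single space direction: `f`, `s`, `F` stand
for `fᵢ`, `sᵢ`, `Fᵢ`. -/
structure IsEntropyPair (η F : E → ℝ → ℝ) (f s : E → ℝ → E) : Prop where
  fderiv_flux : ∀ w a h,
    fderiv ℝ (fun w' => F w' a) w h
      = ⟪gradient (fun w' => η w' a) w, fderiv ℝ (fun w' => f w' a) w h⟫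
  deriv_flux : ∀ w a,
    deriv (fun a' => F w a') a
      = ⟪gradient (fun w' => η w' a) w, deriv (fun a' => f w a') a + s w a⟫

variable {η F : E → ℝ → ℝ} {f s : E → ℝ → E} {φ : Y → E} {ψ : Y → ℝ} {x : Y}

theorem IsEntropyPair.fderiv_comp_apply (hηF : IsEntropyPair η F f s)
    (hF : DifferentiableAt ℝ (fun p : E × ℝ => F p.1 p.2) (φ x, ψ x))
    (hf : DifferentiableAt ℝ (fun p : E × ℝ => f p.1 p.2) (φ x, ψ x))
    (hφ : DifferentiableAt ℝ φ x) (hψ : DifferentiableAt ℝ ψ x) (h : Y) :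
    fderiv ℝ (fun y => F (φ y) (ψ y)) x h
      = ⟪gradient (fun w => η w (ψ x)) (φ x),
          fderiv ℝ (fun y => f (φ y) (ψ y)) x h + fderiv ℝ ψ x h • s (φ x) (ψ x)⟫ := by
  rw [fderiv_comp₂_apply hF hφ hψ, fderiv_comp₂_apply hf hφ hψ, hηF.fderiv_flux,
    hηF.deriv_flux]
  simp only [inner_add_right, real_inner_smul_right]
  ring

theorem IsEntropyPair.fderiv_sub_inner_comp_apply (hηF : IsEntropyPair η F f s) (H : E)
    (hHs : ⟪H, s (φ x) (ψ x)⟫ = 0)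
    (hF : DifferentiableAt ℝ (fun p : E × ℝ => F p.1 p.2) (φ x, ψ x))
    (hf : DifferentiableAt ℝ (fun p : E × ℝ => f p.1 p.2) (φ x, ψ x))
    (hφ : DifferentiableAt ℝ φ x) (hψ : DifferentiableAt ℝ ψ x) (h : Y) :
    fderiv ℝ (fun y => F (φ y) (ψ y) - ⟪H, f (φ y) (ψ y)⟫) x h
      = ⟪gradient (fun w => η w (ψ x)) (φ x) - H,
          fderiv ℝ (fun y => f (φ y) (ψ y)) x h + fderiv ℝ ψ x h • s (φ x) (ψ x)⟫ := by
  have hfc : DifferentiableAt ℝ (fun y => f (φ y) (ψ y)) x :=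
    hf.comp (g := fun p : E × ℝ => f p.1 p.2) x (hφ.prodMk hψ)
  have hFc : DifferentiableAt ℝ (fun y => F (φ y) (ψ y)) x :=
    hF.comp (g := fun p : E × ℝ => F p.1 p.2) x (hφ.prodMk hψ)
  rw [fderiv_fun_sub hFc ((differentiableAt_const H).inner ℝ hfc),
    sub_apply, hηF.fderiv_comp_apply hF hf hφ hψ,
    fderiv_inner_apply ℝ (differentiableAt_const H) hfc]
  simp only [fderiv_fun_const, Pi.zero_apply, zero_apply, inner_zero_left,
    add_zero, inner_sub_left, inner_add_right, real_inner_smul_right, hHs]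
  ring

end EntropyFlux

theorem stmt_17_general {N d : ℕ}
    (α : EuclideanSpace ℝ (Fin d) → ℝ) (hα : ContDiff ℝ 1 α)
    (u : ℝ → EuclideanSpace ℝ (Fin d) → EuclideanSpace ℝ (Fin N))
    (hu : ContDiff ℝ 1 (fun p : ℝ × EuclideanSpace ℝ (Fin d) => u p.1 p.2))
    (v : EuclideanSpace ℝ (Fin d) → EuclideanSpace ℝ (Fin N))
    (f s : Fin d → EuclideanSpace ℝ (Fin N) → ℝ → EuclideanSpace ℝ (Fin N))
    (hf : ∀ i, ContDiff ℝ 1 (fun p : EuclideanSpace ℝ (Fin N) × ℝ => f i p.1 p.2))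
    (η : EuclideanSpace ℝ (Fin N) → ℝ → ℝ)
    (hη : ContDiff ℝ 2 (fun p : EuclideanSpace ℝ (Fin N) × ℝ => η p.1 p.2))
    (F : Fin d → EuclideanSpace ℝ (Fin N) → ℝ → ℝ)
    (hF : ∀ i, ContDiff ℝ 1 (fun p : EuclideanSpace ℝ (Fin N) × ℝ => F i p.1 p.2))
    (hcompat1 : ∀ (i : Fin d) (w : EuclideanSpace ℝ (Fin N)) (a : ℝ)
      (x : EuclideanSpace ℝ (Fin N)),
      fderiv ℝ (fun w' => F i w' a) w x
        = ⟪gradient (fun w' => η w' a) w, fderiv ℝ (fun w' => f i w' a) w x⟫)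
    (hcompat2 : ∀ (i : Fin d) (w : EuclideanSpace ℝ (Fin N)) (a : ℝ),
      deriv (fun a' => F i w a') a
        = ⟪gradient (fun w' => η w' a) w,
            deriv (fun a' => f i w a') a + s i w a⟫)
    (hPDE : ∀ (t : ℝ) (x : EuclideanSpace ℝ (Fin d)),
      deriv (fun τ => u τ x) t
        + ∑ i, fderiv ℝ (fun y => f i (u t y) (α y)) x (EuclideanSpace.single i 1)
        + ∑ i, (fderiv ℝ α x (EuclideanSpace.single i 1)) • s i (u t x) (α x) = 0)
    (H₀ : EuclideanSpace ℝ (Fin N))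
    (hS2 : ∀ (i : Fin d) (w : EuclideanSpace ℝ (Fin N)) (a : ℝ), ⟪H₀, s i w a⟫ = 0) :
    ∀ (t : ℝ) (x : EuclideanSpace ℝ (Fin d)),
      deriv (fun τ => η (u τ x) (α x) - η (v x) (α x) - ⟪H₀, u τ x - v x⟫) t
        + ∑ i, fderiv ℝ
            (fun y => F i (u t y) (α y) - ⟪H₀, f i (u t y) (α y)⟫) x
            (EuclideanSpace.single i 1) = 0 := by
  intro t x
  have hud := hu.differentiable one_ne_zero
  have hux : DifferentiableAt ℝ (fun y => u t y) x :=
    hud.differentiableAt.comp x ((differentiableAt_const t).prodMk differentiableAt_id)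
  have hut : HasDerivAt (fun τ => u τ x) (deriv (fun τ => u τ x) t) t :=
    (hud.differentiableAt.comp t (differentiableAt_id.prodMk (differentiableAt_const x))).hasDerivAt
  have hηu : DifferentiableAt ℝ (fun w => η w (α x)) (u t x) :=
    (hη.differentiable two_ne_zero).differentiableAt.comp (u t x)
      (differentiableAt_id.prodMk (differentiableAt_const (α x)))
  set G := gradient (fun w => η w (α x)) (u t x)
  have htime := hasDerivAt_relEntropy H₀ (v x) hηu hut
  have hflux : ∀ i,
      fderiv ℝ (fun y => F i (u t y) (α y) - ⟪H₀, f i (u t y) (α y)⟫) x (EuclideanSpace.single i 1)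
        = ⟪G - H₀, fderiv ℝ (fun y => f i (u t y) (α y)) x (EuclideanSpace.single i 1)
            + fderiv ℝ α x (EuclideanSpace.single i 1) • s i (u t x) (α x)⟫ :=
    fun i => IsEntropyPair.fderiv_sub_inner_comp_apply ⟨hcompat1 i, hcompat2 i⟩ H₀ (hS2 i _ _)
      ((hF i).differentiable one_ne_zero _) ((hf i).differentiable one_ne_zero _) hux
      ((hα.differentiable one_ne_zero) x) _
  rw [htime.deriv, Finset.sum_congr rfl fun i _ => hflux i, ← inner_sum, ← inner_add_right,
    Finset.sum_add_distrib, ← add_assoc, hPDE, inner_zero_right]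

theorem stmt_17 {N d : ℕ}
    (α : EuclideanSpace ℝ (Fin d) → ℝ) (hα : ContDiff ℝ 1 α)
    (u : ℝ → EuclideanSpace ℝ (Fin d) → EuclideanSpace ℝ (Fin N))
    (hu : ContDiff ℝ 1 (fun p : ℝ × EuclideanSpace ℝ (Fin d) => u p.1 p.2))
    (v : EuclideanSpace ℝ (Fin d) → EuclideanSpace ℝ (Fin N)) (hv : ContDiff ℝ 1 v)
    (f s : Fin d → EuclideanSpace ℝ (Fin N) → ℝ → EuclideanSpace ℝ (Fin N))
    (hf : ∀ i, ContDiff ℝ 1 (fun p : EuclideanSpace ℝ (Fin N) × ℝ => f i p.1 p.2))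
    (hs : ∀ i, ContDiff ℝ 1 (fun p : EuclideanSpace ℝ (Fin N) × ℝ => s i p.1 p.2))
    (η : EuclideanSpace ℝ (Fin N) → ℝ → ℝ)
    (hη : ContDiff ℝ 2 (fun p : EuclideanSpace ℝ (Fin N) × ℝ => η p.1 p.2))
    (F : Fin d → EuclideanSpace ℝ (Fin N) → ℝ → ℝ)
    (hF : ∀ i, ContDiff ℝ 1 (fun p : EuclideanSpace ℝ (Fin N) × ℝ => F i p.1 p.2))
    (hcompat1 : ∀ (i : Fin d) (w : EuclideanSpace ℝ (Fin N)) (a : ℝ)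
      (x : EuclideanSpace ℝ (Fin N)),
      fderiv ℝ (fun w' => F i w' a) w x
        = ⟪gradient (fun w' => η w' a) w, fderiv ℝ (fun w' => f i w' a) w x⟫)
    (hcompat2 : ∀ (i : Fin d) (w : EuclideanSpace ℝ (Fin N)) (a : ℝ),
      deriv (fun a' => F i w a') a
        = ⟪gradient (fun w' => η w' a) w,
            deriv (fun a' => f i w a') a + s i w a⟫)
    (hPDE : ∀ (t : ℝ) (x : EuclideanSpace ℝ (Fin d)),
      deriv (fun τ => u τ x) t
        + ∑ i, fderiv ℝ (fun y => f i (u t y) (α y)) x (EuclideanSpace.single i 1)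
        + ∑ i, (fderiv ℝ α x (EuclideanSpace.single i 1)) • s i (u t x) (α x) = 0)
    (H₀ : EuclideanSpace ℝ (Fin N))
    (hS1 : ∀ x, gradient (fun w => η w (α x)) (v x) = H₀)
    (hS2 : ∀ (i : Fin d) (w : EuclideanSpace ℝ (Fin N)) (a : ℝ), ⟪H₀, s i w a⟫ = 0) :
    ∀ (t : ℝ) (x : EuclideanSpace ℝ (Fin d)),
      deriv (fun τ => η (u τ x) (α x) - η (v x) (α x) - ⟪H₀, u τ x - v x⟫) t
        + ∑ i, fderiv ℝ
            (fun y => F i (u t y) (α y) - ⟪H₀, f i (u t y) (α y)⟫) x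
            (EuclideanSpace.single i 1) = 0 :=
  stmt_17_general α hα u hu v f s hf η hη F hF hcompat1 hcompat2 hPDE H₀ hS2
end
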